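/- Every expression (formula built from atoms, ⊤, ⊥ using ¬, ∧, ∨) is HT-equivalent to an expression in here-and-there negational normal form (HT-NNF), i.e., a formula built from HT-literals (atoms v, ¬v, or ¬¬v) using only ∧ and ∨. -/
import Mathlib


inductive Form (α : Type) : Type
  | top : Form α
  | bot : Form α
  | atom : α → Form α
  | neg : Form α → Form α
  | and : Form α → Form α → Form α
  | or : Form α → Form α → Form α
  | imp : Form α → Form α → Form α

variable {α : Type}

/-- Truth at world `w` (`false` = "here" H, `true` = "there" T) in the
HT-interpretation `⟨IH, IT⟩` under here-and-there Kripke semantics. -/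
def htSat (IH IT : Set α) : Bool → Form α → Prop
  | _, .top => True
  | _, .bot => False
  | w, .atom a => a ∈ (if w then IT else IH)
  | w, .neg φ => ∀ u, w ≤ u → ¬ htSat IH IT u φ
  | w, .and φ ψ => htSat IH IT w φ ∧ htSat IH IT w ψ
  | w, .or φ ψ => htSat IH IT w φ ∨ htSat IH IT w ψ
  | w, .imp φ ψ => ∀ u, w ≤ u → (htSat IH IT u φ → htSat IH IT u ψ)

/-- Classical truth under interpretation `I`. -/
def clSat (I : Set α) : Form α → Prop
  | .top => True
  | .bot => False
  | .atom a => a ∈ I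
  | .neg φ => ¬ clSat I φ
  | .and φ ψ => clSat I φ ∧ clSat I ψ
  | .or φ ψ => clSat I φ ∨ clSat I ψ
  | .imp φ ψ => clSat I φ → clSat I ψ

open Classical in
/-- The reduct of a formula w.r.t. `I`: every maximal occurrence of `¬ψ`
is replaced by `⊥` if `ψ` is classically true under `I`, else by `⊤`. -/
noncomputable def reduct (I : Set α) : Form α → Form α
  | .neg φ => if clSat I φ then .bot else .top
  | .and φ ψ => .and (reduct I φ) (reduct I ψ)
  | .or φ ψ => .or (reduct I φ) (reduct I ψ)
  | .imp φ ψ => .imp (reduct I φ) (reduct I ψ)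
  | .top => .top
  | .bot => .bot
  | .atom a => .atom a

/-- A rule is a pair `(head, body)`; a program is a set of rules. -/
abbrev Program (α : Type) := Set (Form α × Form α)

/-- `I` is a classical model of the program (of the implications body → head). -/
def clModelProg (I : Set α) (P : Program α) : Prop :=
  ∀ r ∈ P, clSat I (.imp r.2 r.1)

/-- `⟨IH, IT⟩` is an HT-model of the program. -/
def htModelProg (IH IT : Set α) (P : Program α) : Prop :=
  ∀ r ∈ P, htSat IH IT false (.imp r.2 r.1)

/-- The reduct of a program. -/
noncomputable def progReduct (I : Set α) (P : Program α) : Program α :=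
  (fun r => (reduct I r.1, reduct I r.2)) '' P

/-- `I` is an answer set of `P`: a ⊆-minimal classical model of the reduct `P^I`. -/
def isAnswerSet (I : Set α) (P : Program α) : Prop :=
  clModelProg I (progReduct I P) ∧ ∀ J ⊂ I, ¬ clModelProg J (progReduct I P)

/-- Expressions: formulas built without `→`. -/
def IsExpr : Form α → Prop
  | .imp _ _ => False
  | .neg φ => IsExpr φ
  | .and φ ψ => IsExpr φ ∧ IsExpr ψ
  | .or φ ψ => IsExpr φ ∧ IsExpr ψ
  | _ => True

/-- All heads and bodies of `P` are expressions. -/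
def ExprProg (P : Program α) : Prop := ∀ r ∈ P, IsExpr r.1 ∧ IsExpr r.2

/-- Atoms occurring in a formula. -/
def atoms : Form α → Set α
  | .atom a => {a}
  | .neg φ => atoms φ
  | .and φ ψ => atoms φ ∪ atoms ψ
  | .or φ ψ => atoms φ ∪ atoms ψ
  | .imp φ ψ => atoms φ ∪ atoms ψ
  | _ => ∅

/-- Atomic formulas: atoms, ⊤, ⊥. -/
inductive AtomicForm : Form α → Prop
  | top : AtomicForm .top
  | bot : AtomicForm .bot
  | atom (a : α) : AtomicForm (.atom a)

/-- HT-literals: `v`, `¬v`, `¬¬v` for atomic `v`. -/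
inductive IsHTLit : Form α → Prop
  | base {φ : Form α} : AtomicForm φ → IsHTLit φ
  | neg {φ : Form α} : AtomicForm φ → IsHTLit (.neg φ)
  | negneg {φ : Form α} : AtomicForm φ → IsHTLit (.neg (.neg φ))

/-- HT-NNF: built from HT-literals using only ∧ and ∨. -/
inductive IsNNF : Form α → Prop
  | lit {φ : Form α} : IsHTLit φ → IsNNF φ
  | and {φ ψ : Form α} : IsNNF φ → IsNNF ψ → IsNNF (.and φ ψ)
  | or {φ ψ : Form α} : IsNNF φ → IsNNF ψ → IsNNF (.or φ ψ)


mutual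
def nnf : Form α → Form α
  | .top => .top
  | .bot => .bot
  | .atom a => .atom a
  | .neg φ => nnfNeg φ
  | .and φ ψ => .and (nnf φ) (nnf ψ)
  | .or φ ψ => .or (nnf φ) (nnf ψ)
  | .imp _ _ => .top

def nnfNeg : Form α → Form α
  | .top => .bot
  | .bot => .top
  | .atom a => .neg (.atom a)
  | .neg φ => nnfNeg2 φ
  | .and φ ψ => .or (nnfNeg φ) (nnfNeg ψ)
  | .or φ ψ => .and (nnfNeg φ) (nnfNeg ψ)
  | .imp _ _ => .top

def nnfNeg2 : Form α → Form α
  | .top => .top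
  | .bot => .bot
  | .atom a => .neg (.neg (.atom a))
  | .neg φ => nnfNeg φ
  | .and φ ψ => .and (nnfNeg2 φ) (nnfNeg2 ψ)
  | .or φ ψ => .or (nnfNeg2 φ) (nnfNeg2 ψ)
  | .imp _ _ => .top
end

mutual
theorem nnf_isNNF (φ : Form α) (h : IsExpr φ) : IsNNF (nnf φ) := by
  cases φ with
  | top => exact .lit (.base .top)
  | bot => exact .lit (.base .bot)
  | atom a => exact .lit (.base (.atom a))
  | neg φ => exact nnfNeg_isNNF φ h
  | and φ ψ => exact .and (nnf_isNNF φ h.1) (nnf_isNNF ψ h.2)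
  | or φ ψ => exact .or (nnf_isNNF φ h.1) (nnf_isNNF ψ h.2)
  | imp φ ψ => exact h.elim

theorem nnfNeg_isNNF (φ : Form α) (h : IsExpr φ) : IsNNF (nnfNeg φ) := by
  cases φ with
  | top => exact .lit (.base .bot)
  | bot => exact .lit (.base .top)
  | atom a => exact .lit (.neg (.atom a))
  | neg φ => exact nnfNeg2_isNNF φ h
  | and φ ψ => exact .or (nnfNeg_isNNF φ h.1) (nnfNeg_isNNF ψ h.2)
  | or φ ψ => exact .and (nnfNeg_isNNF φ h.1) (nnfNeg_isNNF ψ h.2)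
  | imp φ ψ => exact h.elim

theorem nnfNeg2_isNNF (φ : Form α) (h : IsExpr φ) : IsNNF (nnfNeg2 φ) := by
  cases φ with
  | top => exact .lit (.base .top)
  | bot => exact .lit (.base .bot)
  | atom a => exact .lit (.negneg (.atom a))
  | neg φ => exact nnfNeg_isNNF φ h
  | and φ ψ => exact .and (nnfNeg2_isNNF φ h.1) (nnfNeg2_isNNF ψ h.2)
  | or φ ψ => exact .or (nnfNeg2_isNNF φ h.1) (nnfNeg2_isNNF ψ h.2)
  | imp φ ψ => exact h.elim
end

theorem htSat_true (IH IT : Set α) (φ : Form α) :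
    htSat IH IT true φ ↔ clSat IT φ := by
  induction φ with
  | top => simp [htSat, clSat]
  | bot => simp [htSat, clSat]
  | atom a => simp [htSat, clSat]
  | neg φ ih =>
    simp only [htSat, clSat]
    constructor
    · intro h hc; exact h true le_rfl (ih.mpr hc)
    · intro h u hu
      cases u
      · exact absurd hu (by decide)
      · exact fun hs => h (ih.mp hs)
  | and φ ψ ihφ ihψ => simp [htSat, clSat, ihφ, ihψ]
  | or φ ψ ihφ ihψ => simp [htSat, clSat, ihφ, ihψ]
  | imp φ ψ ihφ ihψ =>
    simp only [htSat, clSat]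
    constructor
    · intro h hc; exact ihψ.mp (h true le_rfl (ihφ.mpr hc))
    · intro h u hu
      cases u
      · exact absurd hu (by decide)
      · exact fun hs => ihψ.mpr (h (ihφ.mp hs))

theorem persistence {IH IT : Set α} (hsub : IH ⊆ IT) (φ : Form α) :
    htSat IH IT false φ → htSat IH IT true φ := by
  induction φ with
  | top => intro h; exact h
  | bot => intro h; exact h
  | atom a => intro h; simpa [htSat] using hsub (by simpa [htSat] using h)
  | neg φ ih => intro h u hu; exact h u (Bool.false_le u)
  | and φ ψ ihφ ihψ => intro h; exact ⟨ihφ h.1, ihψ h.2⟩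
  | or φ ψ ihφ ihψ => intro h; exact h.imp ihφ ihψ
  | imp φ ψ ihφ ihψ => intro h u hu; exact h u (Bool.false_le u)

theorem htSat_neg_false {IH IT : Set α} (hsub : IH ⊆ IT) (φ : Form α) :
    htSat IH IT false (.neg φ) ↔ ¬ clSat IT φ := by
  constructor
  · intro h hc; exact h true (Bool.false_le true) ((htSat_true IH IT φ).mpr hc)
  · intro h u hu hs
    cases u
    · exact h ((htSat_true IH IT φ).mp (persistence hsub φ hs))
    · exact h ((htSat_true IH IT φ).mp hs)

mutual
theorem nnfNeg_correct {IH IT : Set α} (hsub : IH ⊆ IT) (φ : Form α) (h : IsExpr φ) :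
    htSat IH IT false (nnfNeg φ) ↔ ¬ clSat IT φ := by
  cases φ with
  | top => simp [nnfNeg, htSat, clSat]
  | bot => simp [nnfNeg, htSat, clSat]
  | atom a =>
    show htSat IH IT false (.neg (.atom a)) ↔ _
    rw [htSat_neg_false hsub]
  | neg φ =>
    show htSat IH IT false (nnfNeg2 φ) ↔ ¬ clSat IT (.neg φ)
    rw [nnfNeg2_correct hsub φ h]
    simp [clSat]
  | and φ ψ =>
    show htSat IH IT false (.or (nnfNeg φ) (nnfNeg ψ)) ↔ _
    have h1 := nnfNeg_correct hsub φ h.1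
    have h2 := nnfNeg_correct hsub ψ h.2
    show (htSat IH IT false (nnfNeg φ) ∨ htSat IH IT false (nnfNeg ψ)) ↔
      ¬ (clSat IT φ ∧ clSat IT ψ)
    rw [h1, h2]; tauto
  | or φ ψ =>
    show htSat IH IT false (.and (nnfNeg φ) (nnfNeg ψ)) ↔ _
    have h1 := nnfNeg_correct hsub φ h.1
    have h2 := nnfNeg_correct hsub ψ h.2
    show (htSat IH IT false (nnfNeg φ) ∧ htSat IH IT false (nnfNeg ψ)) ↔
      ¬ (clSat IT φ ∨ clSat IT ψ)
    rw [h1, h2]; tauto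
  | imp φ ψ => exact h.elim

theorem nnfNeg2_correct {IH IT : Set α} (hsub : IH ⊆ IT) (φ : Form α) (h : IsExpr φ) :
    htSat IH IT false (nnfNeg2 φ) ↔ clSat IT φ := by
  cases φ with
  | top => simp [nnfNeg2, htSat, clSat]
  | bot => simp [nnfNeg2, htSat, clSat]
  | atom a =>
    show htSat IH IT false (.neg (.neg (.atom a))) ↔ _
    rw [htSat_neg_false hsub]
    show ¬ ¬ clSat IT (.atom a) ↔ _
    exact not_not
  | neg φ =>
    show htSat IH IT false (nnfNeg φ) ↔ clSat IT (.neg φ)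
    rw [nnfNeg_correct hsub φ h]; rfl
  | and φ ψ =>
    show (htSat IH IT false (nnfNeg2 φ) ∧ htSat IH IT false (nnfNeg2 ψ)) ↔
      (clSat IT φ ∧ clSat IT ψ)
    rw [nnfNeg2_correct hsub φ h.1, nnfNeg2_correct hsub ψ h.2]
  | or φ ψ =>
    show (htSat IH IT false (nnfNeg2 φ) ∨ htSat IH IT false (nnfNeg2 ψ)) ↔
      (clSat IT φ ∨ clSat IT ψ)
    rw [nnfNeg2_correct hsub φ h.1, nnfNeg2_correct hsub ψ h.2]
  | imp φ ψ => exact h.elim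
end

theorem nnf_correct {IH IT : Set α} (hsub : IH ⊆ IT) (φ : Form α) (h : IsExpr φ) :
    htSat IH IT false (nnf φ) ↔ htSat IH IT false φ := by
  induction φ with
  | top => exact Iff.rfl
  | bot => exact Iff.rfl
  | atom a => exact Iff.rfl
  | neg φ ih =>
    show htSat IH IT false (nnfNeg φ) ↔ _
    rw [nnfNeg_correct hsub φ h, htSat_neg_false hsub]
  | and φ ψ ihφ ihψ =>
    show (htSat IH IT false (nnf φ) ∧ htSat IH IT false (nnf ψ)) ↔
      (htSat IH IT false φ ∧ htSat IH IT false ψ)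
    rw [ihφ h.1, ihψ h.2]
  | or φ ψ ihφ ihψ =>
    show (htSat IH IT false (nnf φ) ∨ htSat IH IT false (nnf ψ)) ↔
      (htSat IH IT false φ ∨ htSat IH IT false ψ)
    rw [ihφ h.1, ihψ h.2]
  | imp φ ψ _ _ => exact h.elim

/-- Every expression is HT-equivalent to an expression in HT-NNF. -/
theorem stmt8 {α : Type} (φ : Form α) (hexpr : IsExpr φ) :
    ∃ ψ : Form α, IsNNF ψ ∧
      ∀ IH IT : Set α, IH ⊆ IT →
        (htSat IH IT false φ ↔ htSat IH IT false ψ) :=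
  ⟨nnf φ, nnf_isNNF φ hexpr, fun _ _ hsub => (nnf_correct hsub φ hexpr).symm⟩
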